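/- Under the hypotheses of Proposition on non-Hopficity (A ∈ GL(2,Q), det A ∈ Z, m > 1 with mA integral and k = m·tr(A) coprime to m), the group G(A) = G(A, L ∩ A⁻¹L) is non-Hopfian: it admits a surjective endomorphism with nontrivial kernel. -/

import Mathlib

open Matrix

/-- The rational coordinate vector of an element of `ℤ²` (written
multiplicatively). -/
def ratVec (v : Multiplicative (Fin 2 → ℤ)) : Fin 2 → ℚ :=
  fun i => ((Multiplicative.toAdd v) i : ℚ)

/-- A rational vector has integer entries. -/
def IsIntVec (w : Fin 2 → ℚ) : Prop := ∀ i, ∃ z : ℤ, w i = (z : ℚ)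

namespace GANH

/-- Cast an integer vector to a rational vector. -/
def qc (x : Fin 2 → ℤ) : Fin 2 → ℚ := fun i => (x i : ℚ)

lemma qc_inj : Function.Injective qc := by
  intro x y h
  funext i
  have h2 : (x i : ℚ) = (y i : ℚ) := congrFun h i
  exact_mod_cast h2

lemma ratVec_eq_qc (v : Multiplicative (Fin 2 → ℤ)) :
    ratVec v = qc (Multiplicative.toAdd v) := rfl

lemma ratVec_ofAdd (x : Fin 2 → ℤ) : ratVec (Multiplicative.ofAdd x) = qc x := rfl

lemma ratVec_inj : Function.Injective ratVec := by
  intro v w h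
  have := qc_inj h
  exact Multiplicative.toAdd.injective this

lemma qc_smul (n : ℤ) (x : Fin 2 → ℤ) : qc (n • x) = (n : ℚ) • qc x := by
  funext i
  simp [qc]

lemma qc_add (x y : Fin 2 → ℤ) : qc (x + y) = qc x + qc y := by
  funext i
  simp [qc]

lemma isIntVec_qc (x : Fin 2 → ℤ) : IsIntVec (qc x) := fun i => ⟨x i, rfl⟩

lemma mulVec_cast (M : Matrix (Fin 2) (Fin 2) ℤ) (x : Fin 2 → ℤ) :
    (M.map (fun z : ℤ => (z : ℚ))).mulVec (qc x) = qc (M.mulVec x) := by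
  funext i
  simp [Matrix.mulVec, dotProduct, qc, Fin.sum_univ_two]

lemma zpow_ofAdd (x : Fin 2 → ℤ) (n : ℤ) :
    (Multiplicative.ofAdd x) ^ n = Multiplicative.ofAdd (n • x) := by
  apply Multiplicative.toAdd.injective
  simp [toAdd_zpow]

end GANH

open GANH HNNExtension

/-- Let `A ∈ GL(2, ℚ)` with `det A ∈ ℤ`, and suppose there is an integer
`m > 1` such that `mA` has integer entries and `k := m · tr A` is coprime to
`m`.  Then the group `G(A) = G(A, L ∩ A⁻¹L)`, the HNN-extension of `L = ℤ²` in
which the stable letter conjugates `L' = L ∩ A⁻¹·L` to `L'' = A·L' = L ∩ A·L`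
via multiplication by `A`, is non-Hopfian: it admits a surjective endomorphism
that is not injective. -/
theorem GA_non_hopfian (A : Matrix (Fin 2) (Fin 2) ℚ) (hA : IsUnit A.det)
    (l : ℤ) (hl : A.det = (l : ℚ))
    (m : ℤ) (hm : 1 < m)
    (hint : ∀ i j, ∃ z : ℤ, (m : ℚ) * A i j = (z : ℚ))
    (k : ℤ) (hk : (k : ℚ) = (m : ℚ) * A.trace)
    (hcop : IsCoprime k m)
    (L' L'' : Subgroup (Multiplicative (Fin 2 → ℤ)))
    (hL' : ∀ v : Multiplicative (Fin 2 → ℤ), v ∈ L' ↔ IsIntVec (A.mulVec (ratVec v)))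
    (hL'' : ∀ w : Multiplicative (Fin 2 → ℤ),
      w ∈ L'' ↔ ∃ v ∈ L', ratVec w = A.mulVec (ratVec v))
    (φ : L' ≃* L'')
    (hφ : ∀ v : L', ratVec ((φ v : L'') : Multiplicative (Fin 2 → ℤ)) =
      A.mulVec (ratVec ((v : Multiplicative (Fin 2 → ℤ))))) :
    ∃ f : HNNExtension (Multiplicative (Fin 2 → ℤ)) L' L'' φ →*
        HNNExtension (Multiplicative (Fin 2 → ℤ)) L' L'' φ,
      Function.Surjective f ∧ ¬ Function.Injective f := by
  classical
  set G₀ := Multiplicative (Fin 2 → ℤ) with hG₀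
  -- the integer matrix `m • A`
  choose Bz hBz using hint
  set Bm : Matrix (Fin 2) (Fin 2) ℤ := Matrix.of Bz with hBmdef
  have hcast : Bm.map (fun z : ℤ => (z : ℚ)) = (m : ℚ) • A := by
    ext i j
    simp [Bm, Matrix.map_apply, ← hBz i j]
  -- the key `mulVec` computation
  have hAmul : ∀ x : Fin 2 → ℤ, A.mulVec (qc (m • x)) = qc (Bm.mulVec x) := by
    intro x
    rw [qc_smul, ← mulVec_cast, hcast]
    rw [Matrix.mulVec_smul, Matrix.smul_mulVec]
  -- m-th powers lie in L'
  have h_pow_mem : ∀ v : G₀, v ^ (m : ℤ) ∈ L' := by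
    intro v
    rw [hL']
    have hrv : ratVec (v ^ (m : ℤ)) = qc (m • Multiplicative.toAdd v) := by
      rw [ratVec_eq_qc, toAdd_zpow]
    rw [hrv, hAmul]
    exact isIntVec_qc _
  -- identification of φ on elements with known image vector
  have hφ_eq : ∀ (u : L') (y : Fin 2 → ℤ),
      A.mulVec (ratVec (u : G₀)) = qc y →
      ((φ u : L'') : G₀) = Multiplicative.ofAdd y := by
    intro u y h
    apply ratVec_inj
    rw [hφ, h, ratVec_ofAdd]
  -- membership of ofAdd (m • x) in L'
  have hmemB : ∀ x : Fin 2 → ℤ, Multiplicative.ofAdd (m • x) ∈ L' := by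
    intro x
    rw [hL', ratVec_ofAdd, hAmul]
    exact isIntVec_qc _
  -- conjugation by t on m • x
  have hconj1 : ∀ x : Fin 2 → ℤ,
      (t : HNNExtension G₀ L' L'' φ) * HNNExtension.of (Multiplicative.ofAdd (m • x)) * t⁻¹ =
        HNNExtension.of (Multiplicative.ofAdd (Bm.mulVec x)) := by
    intro x
    have hme : ((φ ⟨Multiplicative.ofAdd (m • x), hmemB x⟩ : L'') : G₀)
        = Multiplicative.ofAdd (Bm.mulVec x) := by
      refine hφ_eq _ _ ?_
      show A.mulVec (ratVec (Multiplicative.ofAdd (m • x))) = _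
      rw [ratVec_ofAdd, hAmul]
    have h := (equiv_eq_conj (φ := φ) ⟨Multiplicative.ofAdd (m • x), hmemB x⟩).symm
    rw [hme] at h
    exact h
  -- Cayley-Hamilton
  have hCH : A * ((k : ℚ) • (1 : Matrix (Fin 2) (Fin 2) ℚ) - (m : ℚ) • A)
      = ((m * l : ℤ) : ℚ) • 1 := by
    have htr : (k : ℚ) = (m : ℚ) * (A 0 0 + A 1 1) := by
      rw [hk, Matrix.trace_fin_two]
    have hdet : A 0 0 * A 1 1 - A 0 1 * A 1 0 = (l : ℚ) := by
      rw [← Matrix.det_fin_two, hl]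
    ext i j
    fin_cases i <;> fin_cases j <;>
        simp [Matrix.mul_apply, Fin.sum_univ_two, Matrix.one_apply, Matrix.smul_apply,
          smul_eq_mul, Matrix.sub_apply] <;> push_cast
    · linear_combination A 0 0 * htr + (m : ℚ) * hdet
    · linear_combination A 0 1 * htr
    · linear_combination A 1 0 * htr
    · linear_combination A 1 1 * htr + (m : ℚ) * hdet
  -- the matrix `m • adjugate A` over ℤ
  set Cm : Matrix (Fin 2) (Fin 2) ℤ := k • (1 : Matrix (Fin 2) (Fin 2) ℤ) - Bm with hCmdef
  have hcastC : Cm.map (fun z : ℤ => (z : ℚ))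
      = (k : ℚ) • (1 : Matrix (Fin 2) (Fin 2) ℚ) - (m : ℚ) • A := by
    rw [← hcast]
    ext i j
    simp only [Cm, Matrix.map_apply, Matrix.sub_apply, Matrix.smul_apply, smul_eq_mul,
      Matrix.one_apply]
    split <;> push_cast <;> ring
  have hC : ∀ x : Fin 2 → ℤ, A.mulVec (qc (Cm.mulVec x)) = qc ((m * l) • x) := by
    intro x
    rw [← mulVec_cast, hcastC, Matrix.mulVec_mulVec, hCH, Matrix.smul_mulVec,
      Matrix.one_mulVec, ← qc_smul]
  have hmemC : ∀ x : Fin 2 → ℤ, Multiplicative.ofAdd (Cm.mulVec x) ∈ L' := by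
    intro x
    rw [hL', ratVec_ofAdd, hC]
    exact isIntVec_qc _
  have hconj2 : ∀ x : Fin 2 → ℤ,
      (t : HNNExtension G₀ L' L'' φ)⁻¹ * HNNExtension.of (Multiplicative.ofAdd ((m * l) • x)) * t =
        HNNExtension.of (Multiplicative.ofAdd (Cm.mulVec x)) := by
    intro x
    have hme : ((φ ⟨Multiplicative.ofAdd (Cm.mulVec x), hmemC x⟩ : L'') : G₀)
        = Multiplicative.ofAdd ((m * l) • x) := by
      refine hφ_eq _ _ ?_
      show A.mulVec (ratVec (Multiplicative.ofAdd (Cm.mulVec x))) = _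
      rw [ratVec_ofAdd, hC]
    have h := equiv_eq_conj (φ := φ) ⟨Multiplicative.ofAdd (Cm.mulVec x), hmemC x⟩
    rw [hme] at h
    rw [h]
    group
  -- the endomorphism
  let ψ : G₀ →* G₀ := MonoidHom.mk' (fun v => v ^ (m : ℤ)) (fun a b => mul_zpow a b m)
  have hlift : ∀ a : L', (t : HNNExtension G₀ L' L'' φ) * (HNNExtension.of.comp ψ) (a : G₀)
      = (HNNExtension.of.comp ψ) ((φ a : L'') : G₀) * t := by
    intro a
    have h2 : φ (⟨(a : G₀) ^ (m : ℤ), h_pow_mem _⟩ : L') = (φ a) ^ (m : ℤ) := by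
      rw [← map_zpow]
      congr 1
    have h1 := t_mul_of (φ := φ) (⟨(a : G₀) ^ (m : ℤ), h_pow_mem _⟩ : L')
    rw [h2] at h1
    show t * HNNExtension.of ((a : G₀) ^ (m : ℤ))
        = HNNExtension.of (((φ a : L'') : G₀) ^ (m : ℤ)) * t
    rw [h1, SubgroupClass.coe_zpow]
  set f : HNNExtension G₀ L' L'' φ →* HNNExtension G₀ L' L'' φ :=
    HNNExtension.lift (HNNExtension.of.comp ψ) t hlift with hfdef
  have hft : f t = t := HNNExtension.lift_t _ _ _
  have hfof : ∀ v : G₀, f (HNNExtension.of v) = HNNExtension.of (v ^ (m : ℤ)) := by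
    intro v
    rw [hfdef, HNNExtension.lift_of]
    rfl
  -- the range of f contains everything
  have ht_mem : (t : HNNExtension G₀ L' L'' φ) ∈ f.range := ⟨t, hft⟩
  have hr1 : ∀ x : Fin 2 → ℤ, HNNExtension.of (Multiplicative.ofAdd (m • x)) ∈ f.range := by
    intro x
    exact ⟨HNNExtension.of (Multiplicative.ofAdd x), by rw [hfof, zpow_ofAdd]⟩
  have hr2 : ∀ x : Fin 2 → ℤ, HNNExtension.of (Multiplicative.ofAdd (Bm.mulVec x)) ∈ f.range := by
    intro x
    rw [← hconj1 x]
    exact mul_mem (mul_mem ht_mem (hr1 x)) (inv_mem ht_mem)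
  have hr3 : ∀ x : Fin 2 → ℤ, HNNExtension.of (Multiplicative.ofAdd (Cm.mulVec x)) ∈ f.range := by
    intro x
    rw [← hconj2 x]
    have : Multiplicative.ofAdd ((m * l) • x) = Multiplicative.ofAdd (m • (l • x)) := by
      rw [smul_smul]
    rw [this]
    exact mul_mem (mul_mem (inv_mem ht_mem) (hr1 (l • x))) ht_mem
  have hr4 : ∀ x : Fin 2 → ℤ, HNNExtension.of (Multiplicative.ofAdd (k • x)) ∈ f.range := by
    intro x
    have hsum : k • x = Cm.mulVec x + Bm.mulVec x := by
      have : Cm.mulVec x + Bm.mulVec x = (k • (1 : Matrix (Fin 2) (Fin 2) ℤ)).mulVec x := by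
        rw [hCmdef, Matrix.sub_mulVec, sub_add_cancel]
      rw [this, Matrix.smul_mulVec, Matrix.one_mulVec]
    rw [hsum, ofAdd_add, _root_.map_mul]
    exact mul_mem (hr3 x) (hr2 x)
  have hr5 : ∀ g : G₀, HNNExtension.of g ∈ f.range := by
    intro g
    obtain ⟨a, b, hab⟩ := hcop
    set x := Multiplicative.toAdd g with hx
    have hg : g = Multiplicative.ofAdd x := rfl
    have e : (Multiplicative.ofAdd (k • x)) ^ a * (Multiplicative.ofAdd (m • x)) ^ b
        = Multiplicative.ofAdd x := by
      rw [zpow_ofAdd, zpow_ofAdd, ← ofAdd_add, smul_smul, smul_smul, ← add_smul, hab, one_smul]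
    rw [hg, ← e, _root_.map_mul, _root_.map_zpow, _root_.map_zpow]
    exact mul_mem (zpow_mem (hr4 x) a) (zpow_mem (hr1 x) b)
  have hsurj : Function.Surjective f := by
    intro y
    have hy : y ∈ f.range := by
      refine HNNExtension.induction_on y ?_ ?_ ?_ ?_
      · exact hr5
      · exact ht_mem
      · exact fun a b ha hb => mul_mem ha hb
      · exact fun a ha => inv_mem ha
    exact hy
  -- A is not an integer matrix
  have hnotint : ¬ (∀ i j, ∃ z : ℤ, A i j = (z : ℚ)) := by
    intro h
    choose z hz using h
    have htr : (k : ℚ) = ((m * (z 0 0 + z 1 1) : ℤ) : ℚ) := by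
      rw [hk, Matrix.trace_fin_two, hz 0 0, hz 1 1]
      push_cast
      ring
    have hkz : k = m * (z 0 0 + z 1 1) := by exact_mod_cast htr
    have hdvd : m ∣ k := ⟨_, hkz⟩
    have hu := hcop.isUnit_of_dvd' hdvd dvd_rfl
    rcases Int.isUnit_iff.mp hu with h1 | h1 <;> omega
  -- an element outside L'
  have hentry : ∀ (M : Matrix (Fin 2) (Fin 2) ℚ) (i j : Fin 2),
      M.mulVec (qc (Pi.single j 1)) i = M i j := by
    intro M i j
    fin_cases j <;>
      simp [Matrix.mulVec, dotProduct, qc, Fin.sum_univ_two, Pi.single_apply]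
  have ha : ∃ a : G₀, a ∉ L' := by
    by_contra hall
    push_neg at hall
    apply hnotint
    intro i j
    obtain ⟨z, hz⟩ := (hL' (Multiplicative.ofAdd (Pi.single j 1))).mp (hall _) i
    rw [ratVec_ofAdd, hentry] at hz
    exact ⟨z, hz⟩
  -- an element outside L''
  have hb : ∃ b : G₀, b ∉ L'' := by
    by_contra hall
    push_neg at hall
    have hMj : ∀ j : Fin 2, ∃ y : Fin 2 → ℤ, A.mulVec (qc y) = qc (Pi.single j 1) := by
      intro j
      obtain ⟨v, hv, heq⟩ := (hL'' (Multiplicative.ofAdd (Pi.single j 1))).mp (hall _)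
      refine ⟨Multiplicative.toAdd v, ?_⟩
      rw [← ratVec_eq_qc, ← heq, ratVec_ofAdd]
    choose y hy using hMj
    set M : Matrix (Fin 2) (Fin 2) ℤ := Matrix.of (fun i j => y j i) with hMdef
    have hAM : A * M.map (fun z : ℤ => (z : ℚ)) = 1 := by
      ext i j
      have h0 := congrFun (hy j) i
      simp only [Matrix.mulVec, dotProduct, qc, Fin.sum_univ_two] at h0
      simp only [Matrix.mul_apply, Matrix.map_apply, hMdef, Matrix.of_apply,
        Fin.sum_univ_two, Matrix.one_apply]
      rw [h0]
      fin_cases i <;> fin_cases j <;> simp [Pi.single_apply]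
    have hdet1 : (l : ℚ) * ((M.det : ℤ) : ℚ) = 1 := by
      have hh := congrArg Matrix.det hAM
      rw [Matrix.det_mul, Matrix.det_one, hl] at hh
      have hdm : (M.map (fun z : ℤ => (z : ℚ))).det = ((M.det : ℤ) : ℚ) := by
        rw [Matrix.det_fin_two, Matrix.det_fin_two]
        simp only [Matrix.map_apply]
        push_cast
        ring
      rw [hdm] at hh
      exact hh
    have hdet2 : l * M.det = 1 := by exact_mod_cast hdet1
    -- A = M.det • (adjugate M cast), hence integral
    have hadj : (M.adjugate).map (fun z : ℤ => (z : ℚ)) = ((M.det : ℤ) : ℚ) • A := by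
      have hmadj : M.map (fun z : ℤ => (z : ℚ)) * (M.adjugate).map (fun z : ℤ => (z : ℚ))
          = ((M.det : ℤ) : ℚ) • 1 := by
        have h1 : (Int.castRingHom ℚ).mapMatrix (M * M.adjugate)
            = (Int.castRingHom ℚ).mapMatrix M * (Int.castRingHom ℚ).mapMatrix M.adjugate :=
          map_mul _ _ _
        simp only [RingHom.mapMatrix_apply] at h1
        have h2 : ((M * M.adjugate).map fun z : ℤ => ((z : ℚ)))
            = ((M.det : ℤ) : ℚ) • 1 := by
          rw [Matrix.mul_adjugate]
          ext i j
          simp only [Matrix.map_apply, Matrix.smul_apply, Matrix.one_apply, smul_eq_mul]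
          split <;> push_cast <;> ring
        calc M.map (fun z : ℤ => (z : ℚ)) * (M.adjugate).map (fun z : ℤ => (z : ℚ))
            = ((M * M.adjugate).map fun z : ℤ => ((z : ℚ))) := by
              exact h1.symm
          _ = ((M.det : ℤ) : ℚ) • 1 := h2
      calc (M.adjugate).map (fun z : ℤ => (z : ℚ))
          = A * (M.map (fun z : ℤ => (z : ℚ)) * (M.adjugate).map (fun z : ℤ => (z : ℚ))) := by
            rw [← mul_assoc, hAM, one_mul]
        _ = ((M.det : ℤ) : ℚ) • A := by rw [hmadj, Matrix.mul_smul, mul_one]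
    apply hnotint
    intro i j
    refine ⟨M.det * M.adjugate i j, ?_⟩
    have h3 : ((M.adjugate i j : ℤ) : ℚ) = ((M.det : ℤ) : ℚ) * A i j := by
      have h4 := congrArg (fun N : Matrix (Fin 2) (Fin 2) ℚ => N i j) hadj
      simpa [Matrix.map_apply, Matrix.smul_apply, smul_eq_mul] using h4
    have hdu : M.det = 1 ∨ M.det = -1 := by
      refine Int.isUnit_iff.mp (IsUnit.of_mul_eq_one l ?_)
      rw [mul_comm]
      exact hdet2
    have hsq : ((M.det : ℤ) : ℚ) * ((M.det : ℤ) : ℚ) = 1 := by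
      rcases hdu with h | h <;> rw [h] <;> norm_num
    calc A i j = (((M.det : ℤ) : ℚ) * ((M.det : ℤ) : ℚ)) * A i j := by rw [hsq, one_mul]
      _ = ((M.det : ℤ) : ℚ) * ((M.adjugate i j : ℤ) : ℚ) := by rw [mul_assoc, ← h3]
      _ = ((M.det * M.adjugate i j : ℤ) : ℚ) := by push_cast; ring
  -- an element outside both L' and L''
  have hc : ∃ c : G₀, c ∉ L' ∧ c ∉ L'' := by
    obtain ⟨a, ha'⟩ := ha
    obtain ⟨b, hb'⟩ := hb
    by_cases h1 : a ∈ L''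
    · by_cases h2 : b ∈ L'
      · refine ⟨a * b, fun hab => ?_, fun hab => ?_⟩
        · exact ha' ((mul_mem_cancel_right h2).mp hab)
        · exact hb' ((mul_mem_cancel_left h1).mp hab)
      · exact ⟨b, h2, hb'⟩
    · exact ⟨a, ha', h1⟩
  obtain ⟨c, hc1, hc2⟩ := hc
  -- the reduced word t c t⁻¹ c t c⁻¹ t⁻¹ c⁻¹
  have hc1' : c⁻¹ ∉ L' := fun h => hc1 (by rw [← inv_inv c]; exact inv_mem h)
  let w : HNNExtension.NormalWord.ReducedWord G₀ L' L'' :=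
    { head := 1
      toList := [((1 : ℤˣ), c), ((-1 : ℤˣ), c), ((1 : ℤˣ), c⁻¹), ((-1 : ℤˣ), c⁻¹)]
      chain := by
        refine List.isChain_cons_cons.2 ⟨?_, List.isChain_cons_cons.2 ⟨?_,
          List.isChain_cons_cons.2 ⟨?_, List.isChain_singleton _⟩⟩⟩
        · intro h
          rw [HNNExtension.toSubgroup_one] at h
          exact absurd h hc1
        · intro h
          rw [HNNExtension.toSubgroup_neg_one] at h
          exact absurd h hc2
        · intro h
          rw [HNNExtension.toSubgroup_one] at h
          exact absurd h hc1' }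
  set g : HNNExtension G₀ L' L'' φ := w.prod φ with hgdef
  have hgne : g ≠ 1 := by
    intro h
    have hmem : w.prod φ ∈ (HNNExtension.of.range :
        Subgroup (HNNExtension G₀ L' L'' φ)) := by
      rw [← hgdef, h]
      exact ⟨1, map_one _⟩
    have := HNNExtension.ReducedWord.toList_eq_nil_of_mem_of_range φ w hmem
    simp [w] at this
  have hgeq : g = t * HNNExtension.of c * t⁻¹ * HNNExtension.of c *
      t * HNNExtension.of c⁻¹ * t⁻¹ * HNNExtension.of c⁻¹ := by
    show w.prod φ = _
    simp only [w, HNNExtension.NormalWord.ReducedWord.prod, List.map_cons, List.map_nil, List.prod_cons,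
      List.prod_nil, _root_.map_one, one_mul, mul_one]
    norm_num
    group
  -- f kills g
  have hfg : f g = 1 := by
    set u : G₀ := c ^ (m : ℤ) with hudef
    have hu : u ∈ L' := h_pow_mem c
    set d : G₀ := ((φ ⟨u, hu⟩ : L'') : G₀) with hddef
    have hconj : t * HNNExtension.of u * t⁻¹ = HNNExtension.of d :=
      (equiv_eq_conj (φ := φ) ⟨u, hu⟩).symm
    have hfc : f (HNNExtension.of c) = HNNExtension.of u := hfof c
    have hfci : f (HNNExtension.of c⁻¹) = (HNNExtension.of u)⁻¹ := by
      rw [hfof, hudef, _root_.inv_zpow, map_inv]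
    rw [hgeq]
    simp only [_root_.map_mul, map_inv, hft, hfc, hfci]
    have hassoc : (t : HNNExtension G₀ L' L'' φ) * HNNExtension.of u * t⁻¹ * HNNExtension.of u * t *
        (HNNExtension.of u)⁻¹ * t⁻¹ * (HNNExtension.of u)⁻¹
        = (t * HNNExtension.of u * t⁻¹) * HNNExtension.of u *
          (t * HNNExtension.of u * t⁻¹)⁻¹ * (HNNExtension.of u)⁻¹ := by
      group
    rw [hassoc, hconj]
    have hofc : (HNNExtension.of d : HNNExtension G₀ L' L'' φ) * HNNExtension.of u * (HNNExtension.of d)⁻¹ *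
        (HNNExtension.of u)⁻¹ = HNNExtension.of (d * u * d⁻¹ * u⁻¹) := by
      simp only [_root_.map_mul]
      rw [← map_inv, ← map_inv]
    rw [hofc]
    have hcomm : d * u * d⁻¹ * u⁻¹ = 1 := by
      rw [mul_comm d u]
      exact (congrArg (· * u⁻¹) (mul_inv_cancel_right u d)).trans (mul_inv_cancel u)
    rw [hcomm, _root_.map_one]
  have hninj : ¬ Function.Injective f := by
    intro hinj
    exact hgne (hinj (by rw [hfg, _root_.map_one]))
  exact ⟨f, hsurj, hninj⟩
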